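/- arXiv:1504.00777 — 2 statements merged into one kernel-verified Lean document; each statement's English description precedes it below -/
import Mathlib

section
/- Associativity of the L-convolution: let (u_ξ)_{ξ∈I} be a Riesz basis of L²(Ω) with biorthogonal family (v_ξ)_{ξ∈I}. Then for all f, g, h ∈ L²(Ω) one has (f ⋆_L g) ⋆_L h = f ⋆_L (g ⋆_L h) in L²(Ω), and the L-Fourier coefficients of either side at ξ equal f̂(ξ)·ĝ(ξ)·ĥ(ξ). -/
open Complex MeasureTheory Set

noncomputable section

/-- The Riesz basis `u_ξ = T (e_ξ)` built from an orthonormal Hilbert basis `e`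
and a continuous linear isomorphism `T`. -/
def uSys {H : Type*} [NormedAddCommGroup H] [InnerProductSpace ℂ H] [CompleteSpace H]
    {ι : Type*} (e : HilbertBasis ι ℂ H) (T : H ≃L[ℂ] H) (ξ : ι) : H :=
  T (e ξ)

/-- The biorthogonal family `v_ξ = (T⁻¹)* (e_ξ)`. -/
def vSys {H : Type*} [NormedAddCommGroup H] [InnerProductSpace ℂ H] [CompleteSpace H]
    {ι : Type*} (e : HilbertBasis ι ℂ H) (T : H ≃L[ℂ] H) (ξ : ι) : H :=
  ContinuousLinearMap.adjoint (T.symm : H →L[ℂ] H) (e ξ)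

/-! Because `T` is an isomorphism, `u` and `v` are biorthogonal, so the `v`-coefficients of any
convergent series `∑ c ξ • u ξ` are exactly `c`. The coefficients `f̂ ĝ` of `f ⋆ g` lie in `ℓ²`
and `ĥ` is bounded, so `f̂ ĝ ĥ ∈ ℓ²` and `∑ f̂ ĝ ĥ • u` converges; both iterated convolutions
are this one series. -/

theorem Memℓp.mul_of_norm_le {α 𝕜 : Type*} [NormedRing 𝕜] {p : ENNReal} {f g : α → 𝕜}
    (hf : Memℓp f p) {C : ℝ} (hg : ∀ i, ‖g i‖ ≤ C) : Memℓp (fun i => f i * g i) p :=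
  (hf.norm.const_mul C).mono fun i =>
    (norm_mul_le _ _).trans (by rw [mul_comm]; gcongr; exact hg i)

theorem Orthonormal.inner_left_eq_of_hasSum {𝕜 E ι : Type*} [RCLike 𝕜] [NormedAddCommGroup E]
    [InnerProductSpace 𝕜 E] {v : ι → E} (hv : Orthonormal 𝕜 v) {c : ι → 𝕜} {x : E}
    (hx : HasSum (fun i => c i • v i) x) (j : ι) : inner 𝕜 (v j) x = c j := by
  classical
  refine (hx.mapL (innerSL 𝕜 (v j))).unique ?_
  convert hasSum_pi_single j (c j) using 1
  ext i
  rcases eq_or_ne i j with rfl | hij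
  · simp [hv.1 i]
  · simp [hv.inner_eq_zero hij.symm, Pi.single_eq_of_ne hij]

section RieszBasis

variable {H ι : Type*} [NormedAddCommGroup H] [InnerProductSpace ℂ H] [CompleteSpace H]
  (e : HilbertBasis ι ℂ H) (T : H ≃L[ℂ] H)

theorem inner_vSys_eq_repr (ξ : ι) (x : H) : inner ℂ (vSys e T ξ) x = e.repr (T.symm x) ξ := by
  rw [vSys, ContinuousLinearMap.adjoint_inner_left, e.repr_apply_apply]
  rfl

theorem memℓp_inner_vSys (x : H) : Memℓp (fun ξ => inner ℂ (vSys e T ξ) x) 2 := by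
  simpa only [inner_vSys_eq_repr] using lp.memℓp (e.repr (T.symm x))

theorem norm_inner_vSys_le (ξ : ι) (x : H) : ‖inner ℂ (vSys e T ξ) x‖ ≤ ‖T.symm x‖ := by
  rw [inner_vSys_eq_repr, ← e.repr.norm_map]
  exact lp.norm_apply_le_norm two_ne_zero _ ξ

theorem hasSum_uSys_of_memℓp {c : ι → ℂ} (hc : Memℓp c 2) :
    HasSum (fun ξ => c ξ • uSys e T ξ) (T (e.repr.symm ⟨c, hc⟩)) := by
  simpa [uSys] using (e.hasSum_repr_symm ⟨c, hc⟩).mapL (T : H →L[ℂ] H)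

variable {e T}

theorem inner_vSys_eq_of_hasSum {c : ι → ℂ} {y : H}
    (hy : HasSum (fun ξ => c ξ • uSys e T ξ) y) (η : ι) : inner ℂ (vSys e T η) y = c η := by
  rw [vSys, ContinuousLinearMap.adjoint_inner_left]
  refine e.orthonormal.inner_left_eq_of_hasSum ?_ η
  simpa [uSys] using hy.mapL (T.symm : H →L[ℂ] H)

end RieszBasis

theorem stmt_11_general {n : ℕ} (Ω : Set (Fin n → ℝ))
    {ι : Type*}
    (e : HilbertBasis ι ℂ (Lp ℂ 2 (volume.restrict Ω)))
    (T : Lp ℂ 2 (volume.restrict Ω) ≃L[ℂ] Lp ℂ 2 (volume.restrict Ω))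
    (f g h fg gh : Lp ℂ 2 (volume.restrict Ω))
    (hfg : HasSum (fun ξ =>
      ((inner ℂ (vSys e T ξ) f : ℂ) * (inner ℂ (vSys e T ξ) g : ℂ)) • uSys e T ξ) fg)
    (hgh : HasSum (fun ξ =>
      ((inner ℂ (vSys e T ξ) g : ℂ) * (inner ℂ (vSys e T ξ) h : ℂ)) • uSys e T ξ) gh) :
    ∃ S : Lp ℂ 2 (volume.restrict Ω),
      HasSum (fun ξ =>
        ((inner ℂ (vSys e T ξ) fg : ℂ) * (inner ℂ (vSys e T ξ) h : ℂ)) • uSys e T ξ) S ∧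
      HasSum (fun ξ =>
        ((inner ℂ (vSys e T ξ) f : ℂ) * (inner ℂ (vSys e T ξ) gh : ℂ)) • uSys e T ξ) S ∧
      ∀ η, (inner ℂ (vSys e T η) S : ℂ) =
        (inner ℂ (vSys e T η) f : ℂ) * (inner ℂ (vSys e T η) g : ℂ) *
          (inner ℂ (vSys e T η) h : ℂ) := by
  have hfg_coeff := inner_vSys_eq_of_hasSum hfg
  have hgh_coeff := inner_vSys_eq_of_hasSum hgh
  have hmem : Memℓp (fun ξ => inner ℂ (vSys e T ξ) fg * inner ℂ (vSys e T ξ) h) 2 :=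
    (memℓp_inner_vSys e T fg).mul_of_norm_le (norm_inner_vSys_le e T · h)
  have hS := hasSum_uSys_of_memℓp e T hmem
  refine ⟨_, hS, ?_, fun η => ?_⟩
  · simpa only [hfg_coeff, hgh_coeff, mul_assoc] using hS
  · rw [inner_vSys_eq_of_hasSum hS, hfg_coeff]

theorem stmt_11 {n : ℕ} (Ω : Set (Fin n → ℝ)) (hΩo : IsOpen Ω)
    (hΩb : Bornology.IsBounded Ω)
    {ι : Type*} [Countable ι]
    (e : HilbertBasis ι ℂ (Lp ℂ 2 (volume.restrict Ω)))
    (T : Lp ℂ 2 (volume.restrict Ω) ≃L[ℂ] Lp ℂ 2 (volume.restrict Ω))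
    (f g h fg gh : Lp ℂ 2 (volume.restrict Ω))
    (hfg : HasSum (fun ξ =>
      ((inner ℂ (vSys e T ξ) f : ℂ) * (inner ℂ (vSys e T ξ) g : ℂ)) • uSys e T ξ) fg)
    (hgh : HasSum (fun ξ =>
      ((inner ℂ (vSys e T ξ) g : ℂ) * (inner ℂ (vSys e T ξ) h : ℂ)) • uSys e T ξ) gh) :
    ∃ S : Lp ℂ 2 (volume.restrict Ω),
      HasSum (fun ξ =>
        ((inner ℂ (vSys e T ξ) fg : ℂ) * (inner ℂ (vSys e T ξ) h : ℂ)) • uSys e T ξ) S ∧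
      HasSum (fun ξ =>
        ((inner ℂ (vSys e T ξ) f : ℂ) * (inner ℂ (vSys e T ξ) gh : ℂ)) • uSys e T ξ) S ∧
      ∀ η, (inner ℂ (vSys e T η) S : ℂ) =
        (inner ℂ (vSys e T η) f : ℂ) * (inner ℂ (vSys e T η) g : ℂ) *
          (inner ℂ (vSys e T η) h : ℂ) :=
  stmt_11_general Ω e T f g h fg gh hfg hgh
end
end

section
/- L¹-bound for the L-convolution: let (u_ξ)_{ξ∈I} be a Riesz basis of L²(Ω) with biorthogonal family (v_ξ)_{ξ∈I}, and assume ‖u_ξ‖_{L²(Ω)} = 1 for all ξ ∈ I. Then there is a constant C > 0, depending only on the Riesz system (not on f, g, Ω), such that for all f, g ∈ L²(Ω): Σ_{ξ∈I} |f̂(ξ)·ĝ(ξ)|·‖u_ξ‖_{L¹(Ω)} ≤ C·|Ω|^{1/2}·‖f‖_{L²(Ω)}·‖g‖_{L²(Ω)}, where |Ω| denotes the Lebesgue measure of Ω; in particular f ⋆_L g ∈ L¹(Ω) with ‖f ⋆_L g‖_{L¹(Ω)} ≤ C·|Ω|^{1/2}·‖f‖_{L²(Ω)}·‖g‖_{L²(Ω)}.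 -/
/-!
With `f̂(ξ) = ⟪e_ξ, T⁻¹ f⟫`, Parseval gives `∑ |f̂(ξ)|² = ‖T⁻¹ f‖² ≤ ‖T⁻¹‖² ‖f‖²`, so by
Cauchy–Schwarz `∑ |f̂(ξ) ĝ(ξ)| ≤ ‖T⁻¹‖² ‖f‖ ‖g‖`. On a set of finite measure
`‖h‖_{L¹} ≤ |Ω|^{1/2} ‖h‖_{L²}`; this bounds every `‖u_ξ‖_{L¹}` by `|Ω|^{1/2}`, and, since
`‖f ⋆_L g‖_{L²} ≤ ∑ |f̂(ξ) ĝ(ξ)| ‖u_ξ‖_{L²}`, also the `L¹` norm of the convolution.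
The constant is `C = ‖T⁻¹‖² + 1`: the `+ 1` keeps it positive when `L²(Ω) = 0`.
-/

open Complex MeasureTheory Set

noncomputable section

open scoped ENNReal InnerProductSpace

theorem HilbertBasis.hasSum_sq_norm_inner {𝕜 E ι : Type*} [RCLike 𝕜] [NormedAddCommGroup E]
    [InnerProductSpace 𝕜 E] (b : HilbertBasis ι 𝕜 E) (x : E) :
    HasSum (fun i => ‖⟪b i, x⟫_𝕜‖ ^ 2) (‖x‖ ^ 2) := by
  have h := lp.hasSum_norm (p := 2) (by norm_num) (b.repr x)
  simpa only [ENNReal.toReal_ofNat, Real.rpow_two, b.repr_apply_apply,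
    LinearIsometryEquiv.norm_map] using h

theorem MeasureTheory.Lp.integral_norm_le_sqrt_measure_mul_norm {α E : Type*}
    [MeasurableSpace α] [NormedAddCommGroup E] {μ : Measure α} [IsFiniteMeasure μ]
    (f : Lp E 2 μ) :
    ∫ x, ‖f x‖ ∂μ ≤ √(μ Set.univ).toReal * ‖f‖ := by
  have hle : eLpNorm f 1 μ ≤ eLpNorm f 2 μ * μ Set.univ ^ (1 / 2 : ℝ) := by
    convert eLpNorm_le_eLpNorm_mul_rpow_measure_univ one_le_two (Lp.aestronglyMeasurable f)
      using 3
    norm_num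
  rw [integral_norm_eq_lintegral_enorm (Lp.aestronglyMeasurable f),
    ← eLpNorm_one_eq_lintegral_enorm, Lp.norm_def, Real.sqrt_eq_rpow, ENNReal.toReal_rpow,
    mul_comm, ← ENNReal.toReal_mul]
  exact ENNReal.toReal_mono (by finiteness) hle

section RieszBasis

variable {H ι : Type*} [NormedAddCommGroup H] [InnerProductSpace ℂ H] [CompleteSpace H]
  (e : HilbertBasis ι ℂ H) (T : H ≃L[ℂ] H)

theorem inner_vSys (ξ : ι) (x : H) : ⟪vSys e T ξ, x⟫_ℂ = ⟪e ξ, T.symm x⟫_ℂ :=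
  ContinuousLinearMap.adjoint_inner_left _ _ _

theorem hasSum_sq_norm_inner_vSys (x : H) :
    HasSum (fun ξ => ‖⟪vSys e T ξ, x⟫_ℂ‖ ^ 2) (‖T.symm x‖ ^ 2) := by
  simpa only [inner_vSys] using e.hasSum_sq_norm_inner (T.symm x)

theorem exists_hasSum_norm_inner_vSys_mul_le (f g : H) :
    ∃ c, HasSum (fun ξ => ‖⟪vSys e T ξ, f⟫_ℂ * ⟪vSys e T ξ, g⟫_ℂ‖) c ∧
      c ≤ ‖(T.symm : H →L[ℂ] H)‖ ^ 2 * (‖f‖ * ‖g‖) := by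
  obtain ⟨c, -, hc, hsum⟩ := Real.inner_le_Lp_mul_Lq_hasSum_of_nonneg Real.HolderConjugate.two_two
    (norm_nonneg (T.symm f)) (norm_nonneg (T.symm g)) (fun _ => norm_nonneg _)
    (fun _ => norm_nonneg _) (by simpa only [Real.rpow_two] using hasSum_sq_norm_inner_vSys e T f)
    (by simpa only [Real.rpow_two] using hasSum_sq_norm_inner_vSys e T g)
  refine ⟨c, by simpa only [norm_mul] using hsum, hc.trans ?_⟩
  calc ‖T.symm f‖ * ‖T.symm g‖
      ≤ (‖(T.symm : H →L[ℂ] H)‖ * ‖f‖) * (‖(T.symm : H →L[ℂ] H)‖ * ‖g‖) := by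
        gcongr <;> exact (T.symm : H →L[ℂ] H).le_opNorm _
    _ = ‖(T.symm : H →L[ℂ] H)‖ ^ 2 * (‖f‖ * ‖g‖) := by ring

end RieszBasis

theorem stmt_12_general {n : ℕ} (Ω : Set (Fin n → ℝ))
    (hΩb : Bornology.IsBounded Ω)
    {ι : Type*}
    (e : HilbertBasis ι ℂ (Lp ℂ 2 (volume.restrict Ω)))
    (T : Lp ℂ 2 (volume.restrict Ω) ≃L[ℂ] Lp ℂ 2 (volume.restrict Ω))
    (hu1 : ∀ ξ, ‖uSys e T ξ‖ = 1) :
    ∃ C : ℝ, 0 < C ∧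
      ∀ f g : Lp ℂ 2 (volume.restrict Ω),
        Summable (fun ξ =>
          ‖(inner ℂ (vSys e T ξ) f : ℂ) * (inner ℂ (vSys e T ξ) g : ℂ)‖ *
            ∫ x, ‖(uSys e T ξ) x‖ ∂(volume.restrict Ω)) ∧
        (∑' ξ, ‖(inner ℂ (vSys e T ξ) f : ℂ) * (inner ℂ (vSys e T ξ) g : ℂ)‖ *
            ∫ x, ‖(uSys e T ξ) x‖ ∂(volume.restrict Ω)) ≤
          C * Real.sqrt ((volume Ω).toReal) * (‖f‖ * ‖g‖) ∧
        ∀ S : Lp ℂ 2 (volume.restrict Ω),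
          HasSum (fun ξ =>
            ((inner ℂ (vSys e T ξ) f : ℂ) * (inner ℂ (vSys e T ξ) g : ℂ)) • uSys e T ξ) S →
          Integrable (⇑S) (volume.restrict Ω) ∧
          (∫ x, ‖S x‖ ∂(volume.restrict Ω)) ≤
            C * Real.sqrt ((volume Ω).toReal) * (‖f‖ * ‖g‖) := by
  have : IsFiniteMeasure (volume.restrict Ω) :=
    isFiniteMeasure_restrict.mpr hΩb.measure_lt_top.ne
  set K := ‖(T.symm : Lp ℂ 2 (volume.restrict Ω) →L[ℂ] Lp ℂ 2 (volume.restrict Ω))‖ ^ 2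
  set V := √(volume Ω).toReal
  have hL1 (h : Lp ℂ 2 (volume.restrict Ω)) : ∫ x, ‖h x‖ ∂volume.restrict Ω ≤ V * ‖h‖ := by
    simpa only [Measure.restrict_apply_univ] using Lp.integral_norm_le_sqrt_measure_mul_norm h
  refine ⟨K + 1, by positivity, fun f g => ?_⟩
  obtain ⟨c, hc, hcK⟩ := exists_hasSum_norm_inner_vSys_mul_le e T f g
  have hcV : c * V ≤ (K + 1) * V * (‖f‖ * ‖g‖) := calc
    c * V ≤ K * (‖f‖ * ‖g‖) * V := by gcongr
    _ ≤ (K + 1) * (‖f‖ * ‖g‖) * V := by gcongr; linarith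
    _ = (K + 1) * V * (‖f‖ * ‖g‖) := by ring
  have hterm (ξ : ι) : ‖⟪vSys e T ξ, f⟫_ℂ * ⟪vSys e T ξ, g⟫_ℂ‖ *
      ∫ x, ‖(uSys e T ξ) x‖ ∂volume.restrict Ω ≤ ‖⟪vSys e T ξ, f⟫_ℂ * ⟪vSys e T ξ, g⟫_ℂ‖ * V := by
    gcongr
    simpa only [hu1, mul_one] using hL1 (uSys e T ξ)
  have hsum := (hc.summable.mul_right V).of_nonneg_of_le (fun ξ => by positivity) hterm
  refine ⟨hsum, ?_, fun S hS => ⟨(Lp.memLp S).integrable one_le_two, ?_⟩⟩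
  · calc _ ≤ c * V := (hsum.tsum_le_tsum hterm (hc.summable.mul_right V)).trans_eq
          (hc.mul_right V).tsum_eq
      _ ≤ _ := hcV
  · have hSc : ‖S‖ ≤ c := hS.norm_le_of_bounded hc fun ξ => by rw [norm_smul, hu1, mul_one]
    calc _ ≤ V * ‖S‖ := hL1 S
      _ ≤ c * V := by rw [mul_comm]; gcongr
      _ ≤ _ := hcV

theorem stmt_12 {n : ℕ} (Ω : Set (Fin n → ℝ)) (hΩo : IsOpen Ω)
    (hΩb : Bornology.IsBounded Ω)
    {ι : Type*} [Countable ι]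
    (e : HilbertBasis ι ℂ (Lp ℂ 2 (volume.restrict Ω)))
    (T : Lp ℂ 2 (volume.restrict Ω) ≃L[ℂ] Lp ℂ 2 (volume.restrict Ω))
    (hu1 : ∀ ξ, ‖uSys e T ξ‖ = 1) :
    ∃ C : ℝ, 0 < C ∧
      ∀ f g : Lp ℂ 2 (volume.restrict Ω),
        Summable (fun ξ =>
          ‖(inner ℂ (vSys e T ξ) f : ℂ) * (inner ℂ (vSys e T ξ) g : ℂ)‖ *
            ∫ x, ‖(uSys e T ξ) x‖ ∂(volume.restrict Ω)) ∧
        (∑' ξ, ‖(inner ℂ (vSys e T ξ) f : ℂ) * (inner ℂ (vSys e T ξ) g : ℂ)‖ *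
            ∫ x, ‖(uSys e T ξ) x‖ ∂(volume.restrict Ω)) ≤
          C * Real.sqrt ((volume Ω).toReal) * (‖f‖ * ‖g‖) ∧
        ∀ S : Lp ℂ 2 (volume.restrict Ω),
          HasSum (fun ξ =>
            ((inner ℂ (vSys e T ξ) f : ℂ) * (inner ℂ (vSys e T ξ) g : ℂ)) • uSys e T ξ) S →
          Integrable (⇑S) (volume.restrict Ω) ∧
          (∫ x, ‖S x‖ ∂(volume.restrict Ω)) ≤
            C * Real.sqrt ((volume Ω).toReal) * (‖f‖ * ‖g‖) :=
  stmt_12_general Ω hΩb e T hu1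
end
end
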